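/- arXiv:2407.10214 — 4 statements merged into one kernel-verified Lean document; each statement's English description precedes it below -/
import Mathlib

section
/- Let N be odd and let x₁ < ⋯ < x_N be points in [0,1] containing 1/2 with {x_i} symmetric under x ↦ 1 - x. Define D² = ∫₀¹∫₀¹ K(x,y) dx dy − (2/N) ∑_{i=1}^N ∫₀¹ K(x, x_i) dx + (1/N²) ∑_{i,j=1}^N K(x_i, x_j), where K(x,y) = 1 + min(x,y). Then D² = (1/N) ∑_{i=1}^N (i/N − x_i)² − 1/(6N²). -/
lemma inner_int (y : ℝ) (hy0 : 0 ≤ y) (hy1 : y ≤ 1) :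
    ∫ s in (0:ℝ)..1, (1 + min s y) = 1 + y - y^2/2 := by
  have hcont : Continuous fun s : ℝ => min s y := continuous_id.min continuous_const
  rw [intervalIntegral.integral_add intervalIntegrable_const (hcont.intervalIntegrable _ _)]
  have hsplit : (∫ s in (0:ℝ)..1, min s y)
      = (∫ s in (0:ℝ)..y, min s y) + ∫ s in y..1, min s y :=
    (intervalIntegral.integral_add_adjacent_intervals (hcont.intervalIntegrable _ _)
      (hcont.intervalIntegrable _ _)).symm
  have h1 : (∫ s in (0:ℝ)..y, min s y) = ∫ s in (0:ℝ)..y, s := by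
    apply intervalIntegral.integral_congr
    intro s hs
    rw [Set.uIcc_of_le hy0] at hs
    exact min_eq_left hs.2
  have h2 : (∫ s in y..(1:ℝ), min s y) = ∫ s in y..(1:ℝ), y := by
    apply intervalIntegral.integral_congr
    intro s hs
    rw [Set.uIcc_of_le hy1] at hs
    exact min_eq_right hs.1
  rw [hsplit, h1, h2]
  simp [integral_id]
  ring

lemma sum_min_count (N : ℕ) (x : Fin N → ℝ) :
    ∑ i : Fin N, ∑ j : Fin N, x (min i j)
      = ∑ i : Fin N, (2*(N:ℝ) - 2*((i:ℕ):ℝ) - 1) * x i := by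
  have key : ∀ i j : Fin N, x (min i j)
      = (if j < i then x j else 0) + (if i ≤ j then x i else 0) := by
    intro i j
    rcases lt_or_ge j i with h | h
    · rw [min_eq_right h.le, if_pos h, if_neg (not_le.2 h), add_zero]
    · rw [min_eq_left h, if_neg (not_lt.2 h), if_pos h, zero_add]
  simp only [key, Finset.sum_add_distrib]
  rw [Finset.sum_comm (f := fun i j => if j < i then x j else 0)]
  have e1 : ∀ j : Fin N, (∑ i : Fin N, if j < i then x j else 0)
      = ((N : ℝ) - 1 - (j:ℕ)) * x j := by
    intro j
    rw [← Finset.sum_filter]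
    have : Finset.filter (fun i => j < i) Finset.univ = Finset.Ioi j := by ext k; simp
    rw [this, Finset.sum_const, Fin.card_Ioi, nsmul_eq_mul]
    congr 1
    have hj : (j:ℕ) + 1 ≤ N := j.isLt
    rw [Nat.sub_sub, Nat.cast_sub (by omega)]
    push_cast; ring
  have e2 : ∀ i : Fin N, (∑ j : Fin N, if i ≤ j then x i else 0)
      = ((N : ℝ) - (i:ℕ)) * x i := by
    intro i
    rw [← Finset.sum_filter]
    have : Finset.filter (fun j => i ≤ j) Finset.univ = Finset.Ici i := by ext k; simp
    rw [this, Finset.sum_const, Fin.card_Ici, nsmul_eq_mul]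
    congr 1
    rw [Nat.cast_sub i.isLt.le]
  simp only [e1, e2]
  rw [← Finset.sum_add_distrib]
  apply Finset.sum_congr rfl
  intro i _
  ring

lemma sum_sym (N : ℕ) (x : Fin N → ℝ) (hmono : StrictMono x)
    (hsymm : ∀ i, ∃ j, x j = 1 - x i) : ∑ i, x i = N / 2 := by
  choose g hg using hsymm
  have hinj : Function.Injective g := by
    intro a b hab
    apply hmono.injective
    have := hg a
    rw [hab, hg b] at this
    linarith
  have hbij : Function.Bijective g := Finite.injective_iff_bijective.mp hinj
  have h2 : ∑ i, x (g i) = ∑ i, x i := Function.Bijective.sum_comp hbij x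
  have h3 : ∑ i, x (g i) = ∑ i : Fin N, (1 - x i) := Finset.sum_congr rfl (fun i _ => hg i)
  rw [h3, Finset.sum_sub_distrib, Finset.sum_const, Finset.card_univ, Fintype.card_fin,
    nsmul_eq_mul, mul_one] at h2
  linarith

lemma sq_sum (n : ℕ) : ∑ i ∈ Finset.range n, ((i:ℝ)+1)^2
    = (n:ℝ)*((n:ℝ)+1)*(2*(n:ℝ)+1)/6 := by
  induction n with
  | zero => simp
  | succ m ih => rw [Finset.sum_range_succ, ih]; push_cast; ring

theorem mmd_squared_formula (N : ℕ) (hN : Odd N) (x : Fin N → ℝ)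
    (hmono : StrictMono x) (hx : ∀ i, x i ∈ Set.Icc (0:ℝ) 1)
    (hhalf : ∃ i, x i = 1/2)
    (hsymm : ∀ i, ∃ j, x j = 1 - x i)
    (K : ℝ → ℝ → ℝ) (hK : ∀ s t, K s t = 1 + min s t) :
    (∫ y in (0:ℝ)..1, ∫ s in (0:ℝ)..1, K s y)
      - (2 / N) * ∑ i : Fin N, (∫ s in (0:ℝ)..1, K s (x i))
      + (1 / (N:ℝ)^2) * ∑ i : Fin N, ∑ j : Fin N, K (x i) (x j)
    = (1 / N) * ∑ i : Fin N, (((i : ℕ) + 1 : ℝ) / N - x i)^2 - 1 / (6 * (N:ℝ)^2) := by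
  have hNpos : 0 < N := hN.pos
  have hN0 : (N:ℝ) ≠ 0 := Nat.cast_ne_zero.2 hNpos.ne'
  simp only [hK]
  set S1 := ∑ i : Fin N, x i with hS1def
  set S2 := ∑ i : Fin N, (x i)^2 with hS2def
  set T := ∑ i : Fin N, ((i:ℕ):ℝ) * x i with hTdef
  -- double integral
  have hdbl : (∫ y in (0:ℝ)..1, ∫ s in (0:ℝ)..1, (1 + min s y)) = 4/3 := by
    have hcg : ∀ y ∈ Set.uIcc (0:ℝ) 1,
        (∫ s in (0:ℝ)..1, (1 + min s y)) = 1 + y - y^2/2 := by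
      intro y hy
      rw [Set.uIcc_of_le (by norm_num)] at hy
      exact inner_int y hy.1 hy.2
    rw [intervalIntegral.integral_congr hcg]
    have h : ∀ y : ℝ, 1 + y - y^2/2 = 1 + y - y^2 * (1/2) := by intro y; ring
    simp only [h]
    rw [intervalIntegral.integral_sub
        (by apply Continuous.intervalIntegrable; fun_prop)
        (by apply Continuous.intervalIntegrable; fun_prop),
      intervalIntegral.integral_add
        (by apply Continuous.intervalIntegrable; fun_prop)
        (by apply Continuous.intervalIntegrable; fun_prop),
      intervalIntegral.integral_mul_const, integral_pow, integral_id]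
    norm_num
  -- middle sum
  have hmid : ∑ i : Fin N, (∫ s in (0:ℝ)..1, (1 + min s (x i)))
      = (N:ℝ) + S1 - S2/2 := by
    rw [Finset.sum_congr rfl (fun i _ => inner_int (x i) (hx i).1 (hx i).2),
      Finset.sum_sub_distrib, Finset.sum_add_distrib, Finset.sum_const, Finset.card_univ,
      Fintype.card_fin, ← Finset.sum_div, nsmul_eq_mul, mul_one]
  -- double sum
  have hdsum : ∑ i : Fin N, ∑ j : Fin N, (1 + min (x i) (x j))
      = (N:ℝ)*N + (2*(N:ℝ)*S1 - 2*T - S1) := by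
    have h1 : ∀ i j : Fin N, (1:ℝ) + min (x i) (x j) = 1 + x (min i j) := by
      intro i j
      rw [hmono.monotone.map_min]
    simp only [h1, Finset.sum_add_distrib, Finset.sum_const, Finset.card_univ,
      Fintype.card_fin, nsmul_eq_mul, mul_one]
    rw [sum_min_count]
    have h2 : ∑ i : Fin N, (2*(N:ℝ) - 2*((i:ℕ):ℝ) - 1) * x i
        = 2*(N:ℝ)*S1 - 2*T - S1 := by
      have hpt : ∀ i : Fin N, (2*(N:ℝ) - 2*((i:ℕ):ℝ) - 1) * x i
          = 2*(N:ℝ) * x i - 2*(((i:ℕ):ℝ) * x i) - x i := by intro i; ring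
      rw [Finset.sum_congr rfl (fun i _ => hpt i), Finset.sum_sub_distrib,
        Finset.sum_sub_distrib, ← Finset.mul_sum, ← Finset.mul_sum]
    rw [h2]
  -- RHS sum
  have hQ : ∑ i : Fin N, (((i:ℕ):ℝ)+1)^2 = (N:ℝ)*((N:ℝ)+1)*(2*(N:ℝ)+1)/6 := by
    rw [Fin.sum_univ_eq_sum_range (fun i => ((i:ℝ)+1)^2)]
    exact sq_sum N
  have hrhs : ∑ i : Fin N, ((((i:ℕ):ℝ) + 1) / N - x i)^2
      = ((N:ℝ)*((N:ℝ)+1)*(2*(N:ℝ)+1)/6) / (N:ℝ)^2 - (2*T + 2*S1)/N + S2 := by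
    have hpt : ∀ i : Fin N, ((((i:ℕ):ℝ) + 1) / N - x i)^2
        = (((i:ℕ):ℝ)+1)^2 * ((1:ℝ)/(N:ℝ)^2)
          - (((i:ℕ):ℝ) * x i) * (2/(N:ℝ)) - x i * (2/(N:ℝ)) + (x i)^2 := by
      intro i
      field_simp
      ring
    rw [Finset.sum_congr rfl (fun i _ => hpt i), Finset.sum_add_distrib,
      Finset.sum_sub_distrib, Finset.sum_sub_distrib, ← Finset.sum_mul,
      ← Finset.sum_mul, ← Finset.sum_mul, hQ]
    rw [← hS1def, ← hS2def, ← hTdef]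
    field_simp
    ring
  have hsym : S1 = (N:ℝ)/2 := sum_sym N x hmono hsymm
  rw [hdbl, hmid, hdsum, hrhs, hsym]
  field_simp
  ring
end

section
/- For any real numbers x₁, …, x_N in [0,1], the kernel quadrature expression (4/3) − (2/N) ∑_{i=1}^N (1 + (1/2)(2 − x_i)x_i) + (1/N²) ∑_{i,j=1}^N (1 + min(x_i, x_j)) equals (1/N) ∑_{i=1}^N (i/N − x_i)² + (1/N²) ∑_{i=1}^N x_i − (3N+1)/(6N²), provided the sequence x₁ ≤ ⋯ ≤ x_N is nondecreasing. -/
lemma sumsq (n : ℕ) : ∑ i ∈ Finset.range n, ((i:ℝ)+1)^2 = (n:ℝ)*(n+1)*(2*n+1)/6 := by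
  induction n with
  | zero => simp
  | succ n ih => rw [Finset.sum_range_succ, ih]; push_cast; ring

lemma min_sum : ∀ (N : ℕ) (x : Fin N → ℝ), Monotone x →
    ∑ i : Fin N, ∑ j : Fin N, min (x i) (x j)
      = ∑ i : Fin N, (2*(N:ℝ) - 2*(i:ℕ) - 1) * x i := by
  intro N
  induction N with
  | zero => intro x _; simp
  | succ N ih =>
    intro x hmono
    have hcs : Monotone (fun i : Fin N => x i.castSucc) :=
      hmono.comp (fun a b h => Fin.castSucc_le_castSucc_iff.mpr h)
    have hle : ∀ i : Fin N, x i.castSucc ≤ x (Fin.last N) :=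
      fun i => hmono (Fin.le_last _)
    have key := ih (fun i => x i.castSucc) hcs
    rw [Fin.sum_univ_castSucc (f := fun i => ∑ j : Fin (N+1), min (x i) (x j))]
    simp_rw [Fin.sum_univ_castSucc (f := fun j => min (x _) (x j))]
    rw [Fin.sum_univ_castSucc (f := fun i => (2*((N+1:ℕ):ℝ) - 2*(i:ℕ) - 1) * x i)]
    have h1 : ∀ i : Fin N, min (x i.castSucc) (x (Fin.last N)) = x i.castSucc :=
      fun i => min_eq_left (hle i)
    have h2 : ∀ j : Fin N, min (x (Fin.last N)) (x j.castSucc) = x j.castSucc :=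
      fun j => min_eq_right (hle j)
    simp_rw [h1, h2, min_self]
    rw [Finset.sum_add_distrib, key]
    push_cast
    rw [show (∑ i : Fin N, ((2*((N:ℝ)+1) - 2*(i.castSucc:ℕ) - 1) * x i.castSucc))
      = ∑ i : Fin N, ((2*(N:ℝ) - 2*(i:ℕ) - 1) * x i.castSucc + 2 * x i.castSucc) from
      Finset.sum_congr rfl (fun i _ => by rw [Fin.coe_castSucc]; ring)]
    rw [Finset.sum_add_distrib, ← Finset.mul_sum]
    ring

theorem mmd_intermediate_identity (N : ℕ) (hN : 0 < N) (x : Fin N → ℝ)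
    (hmono : Monotone x) (hx : ∀ i, x i ∈ Set.Icc (0:ℝ) 1) :
    (4/3 : ℝ) - (2 / N) * ∑ i : Fin N, (1 + (1/2) * (2 - x i) * x i)
      + (1 / (N:ℝ)^2) * ∑ i : Fin N, ∑ j : Fin N, (1 + min (x i) (x j))
    = (1 / N) * ∑ i : Fin N, (((i : ℕ) + 1 : ℝ) / N - x i)^2
      + (1 / (N:ℝ)^2) * ∑ i : Fin N, x i - (3 * N + 1) / (6 * (N:ℝ)^2) := by
  have hN' : (N:ℝ) ≠ 0 := Nat.cast_ne_zero.mpr hN.ne'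
  set a := ∑ i : Fin N, x i with ha
  set b := ∑ i : Fin N, (x i)^2 with hb
  set T := ∑ i : Fin N, ((i:ℕ):ℝ) * x i with hT
  have hQ : ∑ i : Fin N, (((i:ℕ):ℝ)+1)^2 = (N:ℝ)*(N+1)*(2*N+1)/6 := by
    rw [Fin.sum_univ_eq_sum_range (fun i => ((i:ℝ)+1)^2)]
    exact sumsq N
  have hA : ∑ i : Fin N, (1 + (1/2) * (2 - x i) * x i) = N + a - b/2 := by
    rw [show ∑ i : Fin N, (1 + (1/2) * (2 - x i) * x i)
      = ∑ i : Fin N, ((1:ℝ) + (x i - (x i)^2/2)) from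
      Finset.sum_congr rfl (fun i _ => by ring)]
    rw [Finset.sum_add_distrib, Finset.sum_sub_distrib, ← Finset.sum_div]
    simp only [Finset.sum_const, Finset.card_univ, Fintype.card_fin, nsmul_eq_mul, mul_one,
      ← ha, ← hb]
    ring
  have hB : ∑ i : Fin N, ∑ j : Fin N, (1 + min (x i) (x j))
      = (N:ℝ)^2 + ((2*N-1)*a - 2*T) := by
    have h : ∀ i : Fin N, ∑ j : Fin N, (1 + min (x i) (x j))
        = (N:ℝ) + ∑ j : Fin N, min (x i) (x j) := by
      intro i
      rw [Finset.sum_add_distrib]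
      simp
    simp_rw [h]
    rw [Finset.sum_add_distrib, min_sum N x hmono]
    rw [show ∑ i : Fin N, (2*(N:ℝ) - 2*(i:ℕ) - 1) * x i
      = ∑ i : Fin N, ((2*(N:ℝ)-1) * x i - 2*(((i:ℕ):ℝ) * x i)) from
      Finset.sum_congr rfl (fun i _ => by ring)]
    rw [Finset.sum_sub_distrib, ← Finset.mul_sum, ← Finset.mul_sum]
    simp [ha, hT]
    ring
  have hC : ∑ i : Fin N, (((i:ℕ) + 1 : ℝ) / N - x i)^2
      = ((N:ℝ)*(N+1)*(2*N+1)/6)/(N:ℝ)^2 - (2/N)*(T + a) + b := by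
    rw [show ∑ i : Fin N, (((i:ℕ) + 1 : ℝ) / N - x i)^2
      = ∑ i : Fin N, ((((i:ℕ):ℝ)+1)^2 * (1/(N:ℝ)^2) - (2/N)*(((i:ℕ):ℝ) * x i + x i) + (x i)^2) from
      Finset.sum_congr rfl (fun i _ => by field_simp; ring)]
    rw [Finset.sum_add_distrib, Finset.sum_sub_distrib, ← Finset.sum_mul, hQ,
      ← Finset.mul_sum, Finset.sum_add_distrib]
    simp only [← ha, ← hb, ← hT]
    ring
  rw [hA, hB, hC]
  field_simp
  ring
end

section
/- The cardinality N(n) of the n-th Farey sequence satisfies N(n) / n² → 3/π² as n → ∞. -/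
/-- The n-th Farey sequence: reduced fractions in [0,1] with denominator at most n. -/
def farey (n : ℕ) : Set ℚ := {q : ℚ | 0 ≤ q ∧ q ≤ 1 ∧ q.den ≤ n}

/-!
Sorting the fractions of `farey n` other than `1` by denominator gives
`N(n) = 1 + ∑_{k ≤ n} φ(k)`. Möbius inversion of `∑_{d ∣ k} φ(d) = k` turns the totient sum into
`∑_{d ≤ n} μ(d) T(⌊n / d⌋)` with `T(m) = m (m + 1) / 2`. After division by `n²` the `d`-th term
tends to `μ(d) / (2 d²)` and is bounded by `1 / d²`, so dominated convergence gives the limit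
`∑ μ(d) / (2 d²) = 1 / (2 ζ(2)) = 3 / π²`.
-/

open Finset Filter Topology ArithmeticFunction

open scoped LSeries.notation ArithmeticFunction.zeta ArithmeticFunction.Moebius

theorem Rat.den_natCast_div_natCast_of_coprime {a b : ℕ} (hb : 0 < b) (hab : a.Coprime b) :
    ((a : ℚ) / b).den = b := by
  simpa using
    Rat.den_div_eq_of_coprime (a := a) (b := b) (by exact_mod_cast hb) (by simpa using hab)

-- `⟨b, a⟩` stands for the fraction `a / b ∈ [0, 1)` in lowest terms.
def fareyPairs (n : ℕ) : Finset ((_ : ℕ) × ℕ) :=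
  (Ioc 0 n).sigma fun b ↦ {a ∈ range b | b.Coprime a}

theorem card_fareyPairs (n : ℕ) : (fareyPairs n).card = ∑ k ∈ Ioc 0 n, k.totient := by
  simp only [fareyPairs, card_sigma, Nat.totient_eq_card_coprime]

theorem mem_fareyPairs {n : ℕ} {x : (_ : ℕ) × ℕ} :
    x ∈ fareyPairs n ↔ (0 < x.1 ∧ x.1 ≤ n) ∧ x.2 < x.1 ∧ x.1.Coprime x.2 := by
  simp [fareyPairs]

theorem injOn_fareyPairs (n : ℕ) :
    Set.InjOn (fun x : (_ : ℕ) × ℕ ↦ (x.2 : ℚ) / x.1) (fareyPairs n) := by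
  rintro ⟨b, a⟩ hx ⟨b', a'⟩ hx' h
  simp only [mem_coe, mem_fareyPairs] at hx hx' h
  obtain rfl : b = b' := by
    rw [← Rat.den_natCast_div_natCast_of_coprime hx.1.1 hx.2.2.symm, h,
      Rat.den_natCast_div_natCast_of_coprime hx'.1.1 hx'.2.2.symm]
  have hb : (b : ℚ) ≠ 0 := by exact_mod_cast hx.1.1.ne'
  rw [div_left_inj' hb, Nat.cast_inj] at h
  rw [h]

theorem image_fareyPairs (n : ℕ) :
    ((fareyPairs n).image fun x ↦ (x.2 : ℚ) / x.1 : Set ℚ) = farey n \ {1} := by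
  ext q
  simp only [coe_image, Set.mem_image, mem_coe, mem_fareyPairs, farey, Set.mem_ofPred_eq,
    Set.mem_sdiff, Set.mem_singleton_iff, Sigma.exists]
  constructor
  · rintro ⟨b, a, ⟨⟨hb, hbn⟩, hab, hcop⟩, rfl⟩
    have hlt : (a : ℚ) / b < 1 := by
      rw [div_lt_one (by exact_mod_cast hb)]
      exact_mod_cast hab
    refine ⟨⟨by positivity, hlt.le, ?_⟩, hlt.ne⟩
    rwa [Rat.den_natCast_div_natCast_of_coprime hb hcop.symm]
  · rintro ⟨⟨hq0, hq1, hqn⟩, hne⟩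
    have hnum : 0 ≤ q.num := Rat.num_nonneg.mpr hq0
    have hlt : q.num < q.den := Rat.num_lt_denom_iff.mpr (lt_of_le_of_ne hq1 hne)
    refine ⟨q.den, q.num.toNat, ⟨⟨q.pos, hqn⟩, by omega, ?_⟩, ?_⟩
    · have := q.reduced
      rwa [show q.num.natAbs = q.num.toNat by omega, Nat.coprime_comm] at this
    · rw [show ((q.num.toNat : ℕ) : ℚ) = q.num by exact_mod_cast Int.toNat_of_nonneg hnum]
      exact q.num_div_den

theorem ncard_farey {n : ℕ} (hn : 0 < n) : (farey n).ncard = 1 + ∑ k ∈ Ioc 0 n, k.totient := by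
  have h1 : (1 : ℚ) ∈ farey n := ⟨zero_le_one, le_rfl, hn⟩
  have hfin : (farey n \ {1}).Finite := by
    rw [← image_fareyPairs]
    exact finite_toSet _
  rw [← Set.ncard_sdiff_singleton_add_one h1 (hfin.of_sdiff (Set.finite_singleton 1)),
    ← image_fareyPairs, Set.ncard_coe_finset, card_image_of_injOn (injOn_fareyPairs n),
    card_fareyPairs, add_comm]

theorem sum_Ioc_totient_eq_sum_moebius_mul (n : ℕ) :
    ∑ k ∈ Ioc 0 n, (k.totient : ℝ) = ∑ d ∈ Ioc 0 n, μ d * ∑ m ∈ Ioc 0 (n / d), (m : ℝ) := by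
  have hinv := (sum_eq_iff_sum_mul_moebius_eq (f := fun k ↦ (k.totient : ℝ)) (g := (↑))).mp
    fun k _ ↦ by exact_mod_cast Nat.sum_totient k
  have hsum := sum_Ioc_mul_eq_sum_sum (μ : ArithmeticFunction ℝ) (↑ArithmeticFunction.id) n
  simp only [intCoe_apply, natCoe_apply, id_apply] at hsum
  rw [← hsum]
  refine sum_congr rfl fun k hk ↦ ?_
  rw [mul_apply, ← hinv k (mem_Ioc.mp hk).1]
  simp

theorem sum_Ioc_natCast (m : ℕ) : ∑ i ∈ Ioc 0 m, (i : ℝ) = m * (m + 1) / 2 := by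
  induction m with
  | zero => simp
  | succ m ih =>
    rw [sum_Ioc_succ_top (Nat.zero_le m), ih]
    push_cast
    ring

theorem tendsto_triangle_div_sq :
    Tendsto (fun m : ℕ ↦ (m * (m + 1) / 2 : ℝ) / m ^ 2) atTop (𝓝 (1 / 2)) := by
  have h := (tendsto_one_div_atTop_nhds_zero_nat (𝕜 := ℝ)).const_add 1 |>.div_const 2
  rw [add_zero] at h
  refine h.congr' ?_
  filter_upwards [eventually_ne_atTop 0] with m hm
  field_simp

theorem LSeries_moebius_eq_inv_riemannZeta {s : ℂ} (hs : 1 < s.re) :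
    L ↗μ s = (riemannZeta s)⁻¹ := by
  rw [← LSeries_zeta_eq_riemannZeta hs]
  exact eq_inv_of_mul_eq_one_right (LSeries_zeta_mul_Lseries_moebius hs)

theorem tsum_moebius_div_sq : ∑' d : ℕ, (μ d : ℝ) / d ^ 2 = 6 / Real.pi ^ 2 := by
  have hL := LSeries_moebius_eq_inv_riemannZeta (s := 2) (by norm_num)
  rw [riemannZeta_two, inv_div, LSeries] at hL
  have hterm : ∀ d : ℕ, LSeries.term (fun n ↦ (μ n : ℂ)) 2 d = ((μ d / d ^ 2 : ℝ) : ℂ) := by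
    intro d
    rcases eq_or_ne d 0 with rfl | hd
    · simp
    · rw [LSeries.term_of_ne_zero hd, Complex.cpow_ofNat]
      push_cast
      rfl
  simp_rw [hterm, ← Complex.ofReal_tsum] at hL
  exact_mod_cast hL

theorem tendsto_natCast_div_div_self {d : ℕ} (hd : d ≠ 0) :
    Tendsto (fun n : ℕ ↦ ((n / d : ℕ) : ℝ) / n) atTop (𝓝 (1 / d)) := by
  have hd' : (0 : ℝ) < d := by exact_mod_cast Nat.pos_of_ne_zero hd
  have hfloor := ((tendsto_nat_floor_div_atTop (R := ℝ)).comp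
    ((tendsto_natCast_atTop_atTop (R := ℝ)).atTop_div_const hd')).div_const (d : ℝ)
  refine hfloor.congr' ?_
  filter_upwards [eventually_ne_atTop 0] with n hn
  simp only [Function.comp_apply, Nat.floor_div_eq_div]
  field_simp

section QuadraticGrowth

variable {g : ℕ → ℝ}

theorem tendsto_div_div_sq {c : ℝ} (hgc : Tendsto (fun m ↦ g m / m ^ 2) atTop (𝓝 c)) {d : ℕ}
    (hd : d ≠ 0) : Tendsto (fun n : ℕ ↦ g (n / d) / n ^ 2) atTop (𝓝 (c / d ^ 2)) := by
  have h := (hgc.comp (Nat.tendsto_div_const_atTop hd)).mul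
    ((tendsto_natCast_div_div_self hd).pow 2)
  rw [show c / d ^ 2 = c * (1 / d) ^ 2 by ring]
  refine h.congr' ?_
  filter_upwards [eventually_ge_atTop d] with n hn
  have hq : ((n / d : ℕ) : ℝ) ≠ 0 := by
    exact_mod_cast (Nat.div_pos hn (Nat.pos_of_ne_zero hd)).ne'
  have hn : (n : ℝ) ≠ 0 := by exact_mod_cast (hd.bot_lt.trans_le hn).ne'
  simp only [Function.comp_apply]
  field_simp

theorem abs_div_div_sq_le {K : ℝ} (hg : ∀ m, |g m| ≤ K * m ^ 2) (n d : ℕ) :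
    |g (n / d)| / n ^ 2 ≤ K / d ^ 2 := by
  have hK : 0 ≤ K := by simpa using (abs_nonneg _).trans (hg 1)
  rcases eq_or_ne n 0 with rfl | hn
  · rw [Nat.cast_zero, zero_pow two_ne_zero, div_zero]
    positivity
  rcases eq_or_ne d 0 with rfl | hd
  · have hg0 : g 0 = 0 := by simpa using hg 0
    simp [hg0]
  have hqd : ((n / d : ℕ) : ℝ) * d ≤ n := by exact_mod_cast Nat.div_mul_le_self n d
  calc |g (n / d)| / n ^ 2
      ≤ K * ((n / d : ℕ) : ℝ) ^ 2 / n ^ 2 := by gcongr; exact hg _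
    _ = K * (((n / d : ℕ) : ℝ) * d) ^ 2 / (d ^ 2 * n ^ 2) := by field_simp
    _ ≤ K * n ^ 2 / (d ^ 2 * n ^ 2) := by gcongr
    _ = K / d ^ 2 := by field_simp

theorem tendsto_sum_mul_div_sq {a : ℕ → ℝ} {C K c : ℝ} (ha : ∀ d, |a d| ≤ C)
    (hg : ∀ m, |g m| ≤ K * m ^ 2) (hgc : Tendsto (fun m ↦ g m / m ^ 2) atTop (𝓝 c)) :
    Tendsto (fun n : ℕ ↦ (∑ d ∈ Ioc 0 n, a d * g (n / d)) / n ^ 2) atTop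
      (𝓝 (c * ∑' d, a d / d ^ 2)) := by
  have hg0 : g 0 = 0 := by simpa using hg 0
  have hC : 0 ≤ C := (abs_nonneg _).trans (ha 0)
  set F : ℕ → ℕ → ℝ := fun n d ↦ a d * (g (n / d) / n ^ 2)
  have hsum : ∀ n : ℕ, (∑ d ∈ Ioc 0 n, a d * g (n / d)) / n ^ 2 = ∑' d, F n d := by
    intro n
    rw [tsum_eq_sum (s := Ioc 0 n), sum_div]
    · simp only [F, mul_div_assoc]
    intro d hd
    rw [mem_Ioc, not_and_or, not_lt, Nat.le_zero, not_le] at hd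
    rcases hd with rfl | hd
    · simp [F, hg0]
    · simp [F, Nat.div_eq_of_lt hd, hg0]
  have hlim : ∀ d, Tendsto (fun n ↦ F n d) atTop (𝓝 (c * (a d / d ^ 2))) := by
    intro d
    rcases eq_or_ne d 0 with rfl | hd
    · simp [F, hg0]
    rw [show c * (a d / d ^ 2) = a d * (c / d ^ 2) by ring]
    exact (tendsto_div_div_sq hgc hd).const_mul (a d)
  have hbound : ∀ n d, ‖F n d‖ ≤ C * (K / d ^ 2) := fun n d ↦ by
    rw [Real.norm_eq_abs, abs_mul, abs_div, abs_of_nonneg (by positivity : (0 : ℝ) ≤ n ^ 2)]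
    exact mul_le_mul (ha d) (abs_div_div_sq_le hg n d) (by positivity) hC
  have hsumm : Summable fun d : ℕ ↦ C * (K / d ^ 2) := by
    simpa [div_eq_mul_inv, mul_assoc] using
      (Real.summable_nat_pow_inv.mpr one_lt_two).mul_left (C * K)
  simp_rw [hsum, ← tsum_mul_left]
  exact tendsto_tsum_of_dominated_convergence hsumm hlim (Eventually.of_forall hbound)

end QuadraticGrowth

theorem farey_card_asymptotic :
    Filter.Tendsto (fun n : ℕ => ((farey n).ncard : ℝ) / (n : ℝ)^2)
      Filter.atTop (nhds (3 / Real.pi^2)) := by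
  have htriangle : ∀ m : ℕ, |(m * (m + 1) / 2 : ℝ)| ≤ 1 * m ^ 2 := fun m ↦ by
    have : (m * (m + 1) : ℝ) ≤ 2 * m ^ 2 := by
      exact_mod_cast (by nlinarith : m * (m + 1) ≤ 2 * m ^ 2)
    rw [abs_of_nonneg (by positivity)]
    linarith
  have hmain := tendsto_sum_mul_div_sq (a := fun d ↦ (μ d : ℝ)) (C := 1)
    (fun d ↦ by rw [← Int.cast_abs]; exact_mod_cast abs_moebius_le_one) htriangle
    tendsto_triangle_div_sq
  rw [tsum_moebius_div_sq] at hmain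
  have hone : Tendsto (fun n : ℕ ↦ 1 / (n : ℝ) ^ 2) atTop (𝓝 0) := by
    simpa using (tendsto_one_div_atTop_nhds_zero_nat (𝕜 := ℝ)).pow 2
  convert (hone.add hmain).congr' ?_ using 2
  · ring
  filter_upwards [eventually_gt_atTop 0] with n hn
  rw [ncard_farey hn]
  push_cast
  rw [sum_Ioc_totient_eq_sum_moebius_mul, add_div]
  simp_rw [sum_Ioc_natCast]
end

section
/- If a/b < c/d are consecutive elements of the n-th Farey sequence (in lowest terms), then bc − ad = 1. -/
/-!
Let `q = a/b` in lowest terms with `b ≤ n`. Bézout gives `x/y` with `bx - ay = 1`, and shifting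
`(x, y)` by multiples of `(a, b)` puts `y` in `(n - b, n]`, so `x/y` lies in `F_n` just above `q`.
Any fraction `p/e` strictly between them has `e = y(pb - ae) + b(xe - py) ≥ b + y > n`, so `x/y` is
the successor of `q` in `F_n`.
-/

theorem Int.exists_mul_sub_mul_eq_one_of_isCoprime {a b : ℤ} (hab : IsCoprime a b) (hb : 0 < b)
    (N : ℤ) : ∃ x y : ℤ, b * x - a * y = 1 ∧ N - b < y ∧ y ≤ N := by
  obtain ⟨u, v, huv⟩ := hab
  have hdiv := Int.mul_ediv_add_emod (N + u) b
  have hmod_nonneg := Int.emod_nonneg (N + u) hb.ne'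
  have hmod_lt := Int.emod_lt_of_pos (N + u) hb
  refine ⟨v + a * ((N + u) / b), -u + b * ((N + u) / b), ?_, ?_, ?_⟩
  · linear_combination huv
  · linarith
  · linarith

theorem Rat.add_den_le_den_of_lt_of_lt {q s t : ℚ}
    (h : (q.den : ℤ) * s.num - q.num * s.den = 1) (hqt : q < t) (hts : t < s) :
    q.den + s.den ≤ t.den := by
  rw [Rat.lt_iff] at hqt hts
  have hleft : 1 ≤ t.num * q.den - q.num * t.den := by linarith
  have hright : 1 ≤ s.num * t.den - t.num * s.den := by linarith
  have hden : (t.den : ℤ) =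
      s.den * (t.num * q.den - q.num * t.den) + q.den * (s.num * t.den - t.num * s.den) := by
    linear_combination (-(t.den : ℤ)) * h
  have : (q.den : ℤ) + s.den ≤ t.den := by
    rw [hden]
    nlinarith [Int.natCast_nonneg s.den, Int.natCast_nonneg q.den]
  exact_mod_cast this

theorem Rat.exists_den_mul_num_sub_num_mul_den_eq_one {q : ℚ} {N : ℕ} (hN : q.den ≤ N) :
    ∃ s : ℚ, (q.den : ℤ) * s.num - q.num * s.den = 1 ∧ s.den ≤ N ∧ N < q.den + s.den := by
  obtain ⟨x, y, hxy, hy_gt, hy_le⟩ :=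
    Int.exists_mul_sub_mul_eq_one_of_isCoprime q.isCoprime_num_den (by exact_mod_cast q.pos) N
  have hy : 0 < y := by omega
  have hcop : x.natAbs.Coprime y.natAbs :=
    Int.isCoprime_iff_gcd_eq_one.mp ⟨q.den, -q.num, by linear_combination hxy⟩
  have hnum := Rat.num_div_eq_of_coprime hy hcop
  have hden := Rat.den_div_eq_of_coprime hy hcop
  refine ⟨x / y, by rw [hnum, hden]; exact hxy, ?_, ?_⟩ <;> omega

theorem farey_consecutive_general (n : ℕ) (q r : ℚ)
    (hq : q ∈ farey n) (hr : r ∈ farey n) (hlt : q < r)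
    (hconsec : ∀ s ∈ farey n, ¬(q < s ∧ s < r)) :
    (q.den : ℤ) * r.num - q.num * (r.den : ℤ) = 1 := by
  obtain ⟨hq_nonneg, -, hq_den⟩ := hq
  obtain ⟨-, hr_le_one, hr_den⟩ := hr
  obtain ⟨s, hdet, hs_den, hgap⟩ := Rat.exists_den_mul_num_sub_num_mul_den_eq_one hq_den
  have hqs : q < s := by
    rw [Rat.lt_iff]
    linarith
  have hsr : s ≤ r := by
    by_contra! hrs
    have := Rat.add_den_le_den_of_lt_of_lt hdet hlt hrs
    omega
  have hs : s ∈ farey n := ⟨hq_nonneg.trans hqs.le, hsr.trans hr_le_one, hs_den⟩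
  have hrs : r ≤ s := not_lt.mp fun h => hconsec s hs ⟨hqs, h⟩
  rwa [le_antisymm hrs hsr]

/-- For consecutive elements a/b < c/d of the n-th Farey sequence, bc - ad = 1. -/
theorem farey_consecutive (n : ℕ) (hn : 1 ≤ n) (q r : ℚ)
    (hq : q ∈ farey n) (hr : r ∈ farey n) (hlt : q < r)
    (hconsec : ∀ s ∈ farey n, ¬(q < s ∧ s < r)) :
    (q.den : ℤ) * r.num - q.num * (r.den : ℤ) = 1 :=
  farey_consecutive_general n q r hq hr hlt hconsec
end
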